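/- For every x ∈ X and every subset Ŝ ⊆ {1,…,N}, the best-response map satisfies ∑_{i∈Ŝ} ∇_{x_i}F(x)ᵀ (x̂_i(x) − x_i) ≤ − q ∑_{i∈Ŝ} ‖x̂_i(x) − x_i‖² + ∑_{i∈Ŝ} [ G(x) − G(x̂_i(x), x_{-i}) ], where (x̂_i(x), x_{-i}) denotes the vector obtained from x by replacing its i-th block with x̂_i(x). -/

import Mathlib

open scoped RealInnerProductSpace
open Filter MeasureTheory ProbabilityTheory

/-- The `i`-th block space `ℝ^{n i}`. -/
abbrev Blk {N : ℕ} (n : Fin N → ℕ) (i : Fin N) := EuclideanSpace ℝ (Fin (n i))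

/-- The full space `ℝ^n = ℝ^{n 0} × ⋯ × ℝ^{n (N-1)}` with the Euclidean (ℓ²) norm. -/
abbrev Full {N : ℕ} (n : Fin N → ℕ) := PiLp 2 (fun i => Blk n i)

/-- `upd x i xi` is the vector obtained from `x` by replacing its `i`-th block with `xi`. -/
noncomputable def upd {N : ℕ} {n : Fin N → ℕ} (x : Full n) (i : Fin N) (xi : Blk n i) :
    Full n :=
  WithLp.toLp 2 (Function.update x i xi)

/-- Partial gradient `∇_{x_i} F (x)` of `F` with respect to the `i`-th block. -/
noncomputable def pgrad {N : ℕ} {n : Fin N → ℕ} (F : Full n → ℝ) (x : Full n) (i : Fin N) :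
    Blk n i :=
  gradient (fun z => F (upd x i z)) (x i)

/-- `ξ` is a subgradient of `g` at `x` relative to the set `S`. -/
def IsSubgradOn {E : Type*} [NormedAddCommGroup E] [InnerProductSpace ℝ E]
    (S : Set E) (g : E → ℝ) (x ξ : E) : Prop :=
  ∀ y ∈ S, g x + ⟪ξ, y - x⟫ ≤ g y

/-- `xs` is a stationary point of `min_{x ∈ X} F x + G x`: there is a subgradient
`ξ ∈ ∂G(xs)` with `(∇F(xs) + ξ)ᵀ (y - xs) ≥ 0` for all `y ∈ X`. -/
def IsStationaryPt {N : ℕ} {n : Fin N → ℕ} (X : Set (Full n)) (F G : Full n → ℝ)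
    (xs : Full n) : Prop :=
  ∃ ξ : Full n, IsSubgradOn X G xs ξ ∧ ∀ y ∈ X, 0 ≤ ⟪gradient F xs + ξ, y - xs⟫

/-- `xs` is a coordinate-wise stationary point: for each block `i` there is a subgradient
`ξ_i` at `xs i` of the convex function `x_i ↦ G (x_i, xs_{-i})` with
`(∇_{x_i} F(xs) + ξ_i)ᵀ (y_i - xs_i) ≥ 0` for all `y_i ∈ X_i`. -/
def IsCoordStationaryPt {N : ℕ} {n : Fin N → ℕ} (Xi : ∀ i, Set (Blk n i))
    (F G : Full n → ℝ) (xs : Full n) : Prop :=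
  ∀ i, ∃ ξi : Blk n i,
    IsSubgradOn (Xi i) (fun zi => G (upd xs i zi)) (xs i) ξi ∧
    ∀ yi ∈ Xi i, 0 ≤ ⟪pgrad F xs i + ξi, yi - xs i⟫

/-! Fix a block `i`. The point `x̂_i(x)` minimizes the `q`-strongly convex function
`F̃_i(·; x) + G(·, x_{-i})` over `X_i`, so this function grows at least quadratically away from it:
its value at `x_i` exceeds its value at `x̂_i(x)` by at least `q/2 ‖x̂_i(x) - x_i‖²`. The first-order
inequality for the strongly convex `F̃_i(·; x)` at `x_i`, whose gradient is `∇_{x_i}F(x)` by (F2),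
contributes the other `q/2 ‖x̂_i(x) - x_i‖²`. Adding the two inequalities cancels the `F̃_i` values;
summing over `Ŝ` gives the claim. -/

section Convexity

open Set Topology

variable {E : Type*} [NormedAddCommGroup E] [InnerProductSpace ℝ E] {s : Set E} {m : ℝ}

lemma le_of_tendsto_of_forall_Ioo_le_add_mul {u : ℝ → ℝ} {L B c : ℝ}
    (hu : Tendsto u (𝓝[>] 0) (𝓝 L)) (h : ∀ t ∈ Ioo (0 : ℝ) 1, u t ≤ B + t * c) : L ≤ B := by
  have hbound : Tendsto (fun t : ℝ => B + t * c) (𝓝[>] 0) (𝓝 B) := by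
    have : Continuous fun t : ℝ => B + t * c := by fun_prop
    simpa using this.tendsto 0 |>.mono_left nhdsWithin_le_nhds
  refine le_of_tendsto_of_tendsto hu hbound ?_
  filter_upwards [Ioo_mem_nhdsGT zero_lt_one] using h

lemma StrongConvexOn.inner_gradient_add_le [CompleteSpace E] {f : E → ℝ}
    (hf : StrongConvexOn s m f) {a b : E} (hfa : DifferentiableAt ℝ f a) (ha : a ∈ s)
    (hb : b ∈ s) : ⟪gradient f a, b - a⟫ + m / 2 * ‖b - a‖ ^ 2 ≤ f b - f a := by
  have hline : HasLineDerivAt ℝ f ⟪gradient f a, b - a⟫ a (b - a) := by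
    simpa using hfa.hasGradientAt.hasFDerivAt.hasLineDerivAt (b - a)
  refine le_of_tendsto_of_forall_Ioo_le_add_mul (c := m / 2 * ‖b - a‖ ^ 2)
    (hline.tendsto_slope_zero_right.add_const _) fun t ⟨ht0, ht1⟩ => ?_
  have hconv := hf.2 hb ha ht0.le (sub_nonneg.2 ht1.le) (add_sub_cancel t 1)
  have hpt : t • b + (1 - t) • a = a + t • (b - a) := by module
  simp only [hpt, smul_eq_mul] at hconv ⊢
  have hslope :
      t⁻¹ * (f (a + t • (b - a)) - f a) ≤ f b - f a - (1 - t) * (m / 2 * ‖b - a‖ ^ 2) := by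
    rw [inv_mul_le_iff₀ ht0]
    linarith
  linarith

lemma StrongConvexOn.add_sq_norm_sub_le_of_isMinOn {h : E → ℝ} (hh : StrongConvexOn s m h)
    {a b : E} (ha : a ∈ s) (hb : b ∈ s) (hmin : IsMinOn h s b) :
    h b + m / 2 * ‖a - b‖ ^ 2 ≤ h a := by
  refine le_of_tendsto_of_forall_Ioo_le_add_mul (c := m / 2 * ‖a - b‖ ^ 2)
    tendsto_const_nhds fun t ⟨ht0, ht1⟩ => ?_
  have hconv := hh.2 ha hb ht0.le (sub_nonneg.2 ht1.le) (add_sub_cancel t 1)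
  have hle := isMinOn_iff.1 hmin _ (hh.1 ha hb ht0.le (sub_nonneg.2 ht1.le) (add_sub_cancel t 1))
  simp only [smul_eq_mul] at hconv
  have : t * (h b + m / 2 * ‖a - b‖ ^ 2) ≤ t * (h a + t * (m / 2 * ‖a - b‖ ^ 2)) := by
    nlinarith
  exact le_of_mul_le_mul_left this ht0

lemma StrongConvexOn.inner_gradient_le_of_isMinOn_add [CompleteSpace E] {f g : E → ℝ}
    (hf : StrongConvexOn s m f) (hg : ConvexOn ℝ s g) {a b : E} (hfa : DifferentiableAt ℝ f a)
    (ha : a ∈ s) (hb : b ∈ s) (hmin : IsMinOn (f + g) s b) :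
    ⟪gradient f a, b - a⟫ ≤ -(m * ‖b - a‖ ^ 2) + (g a - g b) := by
  have hfg : StrongConvexOn s m (f + g) := by
    simpa [StrongConvexOn] using hf.add (uniformConvexOn_zero.2 hg)
  have hgrad := hf.inner_gradient_add_le hfa ha hb
  have hgrowth := hfg.add_sq_norm_sub_le_of_isMinOn ha hb hmin
  rw [norm_sub_rev] at hgrowth
  simp only [Pi.add_apply] at hgrowth
  linarith

end Convexity

section BlockUpdate

variable {N : ℕ} {n : Fin N → ℕ}

@[simp]
lemma upd_eq_self (x : Full n) (i : Fin N) : upd x i (x i) = x := by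
  ext1 j; simp [upd]

lemma upd_combo (x : Full n) (i : Fin N) (z w : Blk n i) {c c' : ℝ} (h : c + c' = 1) :
    upd x i (c • z + c' • w) = c • upd x i z + c' • upd x i w := by
  refine PiLp.ext fun j => ?_
  rcases eq_or_ne j i with rfl | hj
  · simp [upd]
  · simp [upd, Function.update_of_ne hj, Convex.combo_self h]

lemma upd_mem_pi {Xi : ∀ i, Set (Blk n i)} {x : Full n} (hx : ∀ j, x j ∈ Xi j) (i : Fin N)
    {z : Blk n i} (hz : z ∈ Xi i) : ∀ j, upd x i z j ∈ Xi j := by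
  intro j
  rcases eq_or_ne j i with rfl | hj
  · simpa [upd] using hz
  · simpa [upd, Function.update_of_ne hj] using hx j

lemma ConvexOn.comp_upd {X : Set (Full n)} {G : Full n → ℝ} (hG : ConvexOn ℝ X G) {x : Full n}
    {i : Fin N} {S : Set (Blk n i)} (hS : Convex ℝ S) (hmem : ∀ z ∈ S, upd x i z ∈ X) :
    ConvexOn ℝ S fun z => G (upd x i z) := by
  refine ⟨hS, fun z hz w hw c c' hc hc' hcc => ?_⟩
  simpa only [upd_combo x i z w hcc] using hG.2 (hmem z hz) (hmem w hw) hc hc' hcc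

end BlockUpdate

theorem best_response_descent_bound_general
    {N : ℕ} {n : Fin N → ℕ} (Xi : ∀ i, Set (Blk n i))
    (X : Set (Full n)) (hXdef : X = {x : Full n | ∀ i, x i ∈ Xi i})
    (F G : Full n → ℝ) (Ftil : ∀ i, Blk n i → Full n → ℝ)
    -- G is convex and continuous on X
    (hGconv : ConvexOn ℝ X G)
    -- (F1) each F̃_i(·; w) is strongly convex on X_i with constant q > 0, and differentiable
    (q : ℝ)
    (hF1 : ∀ i, ∀ w ∈ X, StrongConvexOn (Xi i) q (fun z => Ftil i z w))
    (hFtildiff : ∀ i, ∀ w ∈ X, Differentiable ℝ (fun z => Ftil i z w))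
    -- (F2) gradient consistency: ∇F̃_i(x_i; x) = ∇_{x_i} F(x) for all x ∈ X
    (hF2 : ∀ i, ∀ x ∈ X, gradient (fun z => Ftil i z x) (x i) = pgrad F x i)
    -- the best-response map: x̂_i(x) minimizes F̃_i(·; x) + G(·, x_{-i}) over X_i
    (xhat : Full n → Full n)
    (hxhat : ∀ y ∈ X, ∀ i, xhat y i ∈ Xi i ∧
      ∀ zi ∈ Xi i, Ftil i (xhat y i) y + G (upd y i (xhat y i)) ≤ Ftil i zi y + G (upd y i zi))
    -- the point and the subset of blocks
    (x : Full n) (hx : x ∈ X) (Shat : Finset (Fin N)) :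
    ∑ i ∈ Shat, ⟪pgrad F x i, xhat x i - x i⟫ ≤
      - q * ∑ i ∈ Shat, ‖xhat x i - x i‖ ^ 2 +
        ∑ i ∈ Shat, (G x - G (upd x i (xhat x i))) := by
  subst hXdef
  have hblock : ∀ i ∈ Shat, ⟪pgrad F x i, xhat x i - x i⟫ ≤
      -(q * ‖xhat x i - x i‖ ^ 2) + (G x - G (upd x i (xhat x i))) := by
    intro i _
    obtain ⟨hmem, hmin⟩ := hxhat x hx i
    have hslice := hGconv.comp_upd (hF1 i x hx).1 fun z hz => upd_mem_pi hx i hz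
    rw [← hF2 i x hx]
    simpa using (hF1 i x hx).inner_gradient_le_of_isMinOn_add hslice
      (hFtildiff i x hx _) (hx i) hmem (isMinOn_iff.2 hmin)
  calc ∑ i ∈ Shat, ⟪pgrad F x i, xhat x i - x i⟫
      ≤ ∑ i ∈ Shat, (-(q * ‖xhat x i - x i‖ ^ 2) + (G x - G (upd x i (xhat x i)))) :=
        Finset.sum_le_sum hblock
    _ = - q * ∑ i ∈ Shat, ‖xhat x i - x i‖ ^ 2 +
        ∑ i ∈ Shat, (G x - G (upd x i (xhat x i))) := by
        rw [Finset.sum_add_distrib, neg_mul, Finset.mul_sum, ← Finset.sum_neg_distrib]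

/-- **Descent property of the best response (Lemma on errors).** For every `x ∈ X` and every
subset `Ŝ ⊆ {1,…,N}`,
`∑_{i∈Ŝ} ∇_{x_i}F(x)ᵀ (x̂_i(x) − x_i) ≤ − q ∑_{i∈Ŝ} ‖x̂_i(x) − x_i‖² +
∑_{i∈Ŝ} [G(x) − G(x̂_i(x), x_{-i})]`. -/
theorem best_response_descent_bound
    {N : ℕ} {n : Fin N → ℕ} (Xi : ∀ i, Set (Blk n i))
    (X : Set (Full n)) (hXdef : X = {x : Full n | ∀ i, x i ∈ Xi i})
    (F G : Full n → ℝ) (Ftil : ∀ i, Blk n i → Full n → ℝ)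
    -- each X_i is nonempty, closed and convex
    (hXi : ∀ i, (Xi i).Nonempty ∧ IsClosed (Xi i) ∧ Convex ℝ (Xi i))
    -- F is C¹ on an open set containing X
    (U : Set (Full n)) (hUopen : IsOpen U) (hXU : X ⊆ U) (hFC1 : ContDiffOn ℝ 1 F U)
    -- G is convex and continuous on X
    (hGconv : ConvexOn ℝ X G) (hGcont : ContinuousOn G X)
    -- (F1) each F̃_i(·; w) is strongly convex on X_i with constant q > 0, and differentiable
    (q : ℝ) (hq : 0 < q)
    (hF1 : ∀ i, ∀ w ∈ X, StrongConvexOn (Xi i) q (fun z => Ftil i z w))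
    (hFtildiff : ∀ i, ∀ w ∈ X, Differentiable ℝ (fun z => Ftil i z w))
    -- (F2) gradient consistency: ∇F̃_i(x_i; x) = ∇_{x_i} F(x) for all x ∈ X
    (hF2 : ∀ i, ∀ x ∈ X, gradient (fun z => Ftil i z x) (x i) = pgrad F x i)
    -- the best-response map: x̂_i(x) minimizes F̃_i(·; x) + G(·, x_{-i}) over X_i
    (xhat : Full n → Full n)
    (hxhat : ∀ y ∈ X, ∀ i, xhat y i ∈ Xi i ∧
      ∀ zi ∈ Xi i, Ftil i (xhat y i) y + G (upd y i (xhat y i)) ≤ Ftil i zi y + G (upd y i zi))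
    -- the point and the subset of blocks
    (x : Full n) (hx : x ∈ X) (Shat : Finset (Fin N)) :
    ∑ i ∈ Shat, ⟪pgrad F x i, xhat x i - x i⟫ ≤
      - q * ∑ i ∈ Shat, ‖xhat x i - x i‖ ^ 2 +
        ∑ i ∈ Shat, (G x - G (upd x i (xhat x i))) :=
  best_response_descent_bound_general Xi X hXdef F G Ftil hGconv q hF1 hFtildiff hF2 xhat hxhat x hx
    Shat
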